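/- arXiv:2005.03178 — 3 statements merged into one kernel-verified Lean document; each statement's English description precedes it below -/
import Mathlib

section
/- Let n ≥ 1 and let f, g ∈ ℤ[X] be polynomials with deg f < n and deg g < n. Let r be the remainder of f·g upon division by X^n + 1. Then every coefficient of r satisfies |r_i| ≤ sqrt(Σ_j f_j²) · sqrt(Σ_j g_j²), i.e. each coefficient of the product reduced modulo X^n+1 is bounded by the product of the Euclidean norms of the coefficient vectors of f and g. -/
/-!
Since `X ^ n = -1` modulo `X ^ n + 1`, the `i`-th coefficient of `f * g` reduced modulo
`X ^ n + 1` is `(fg)ᵢ - (fg)ᵢ₊ₙ = ∑ⱼ ± fⱼ gᵢ₋ⱼ`, indices taken mod `n` and the sign flipping on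
wrap-around. As `j` runs through `ℤ/n`, so does `i - j`; the second factor is thus a signed
permutation of the coefficient vector of `g`, and Cauchy–Schwarz gives the bound.
-/

open Polynomial Finset

theorem Real.abs_sum_mul_le_sqrt_mul_sqrt {ι : Type*} (s : Finset ι) (f g : ι → ℝ) :
    |∑ i ∈ s, f i * g i| ≤ √(∑ i ∈ s, f i ^ 2) * √(∑ i ∈ s, g i ^ 2) := by
  rw [← Real.sqrt_mul (sum_nonneg fun i _ => sq_nonneg (f i))]
  exact Real.abs_le_sqrt (sum_mul_sq_le_sq_mul_sq s f g)

theorem Fin.val_sub_eq_ite {n : ℕ} {i j : Fin n} :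
    ((i - j : Fin n) : ℕ) = if j ≤ i then (i : ℕ) - j else (i : ℕ) + n - j := by
  split_ifs with h
  · exact Fin.coe_sub_iff_le.2 h
  · rw [Fin.coe_sub_iff_lt.2 (not_le.1 h), add_comm (n : ℕ)]

theorem Fin.sum_sq_ite_neg_sub {R : Type*} [Ring R] {n : ℕ} [NeZero n] (b : Fin n → R)
    (i : Fin n) : ∑ j, (if j ≤ i then b (i - j) else -b (i - j)) ^ 2 = ∑ j, b j ^ 2 := by
  simp only [apply_ite (· ^ 2), neg_sq, ite_self]
  exact (Equiv.subLeft i).sum_comp (b · ^ 2)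

namespace Polynomial

section Semiring

variable {R : Type*} [Semiring R] {n : ℕ}

theorem natDegree_lt_of_degree_lt (hn : n ≠ 0) {p : R[X]} (h : p.degree < n) :
    p.natDegree < n := by
  rcases eq_or_ne p 0 with rfl | hp
  · simpa [Nat.pos_iff_ne_zero]
  · exact (natDegree_lt_iff_degree_lt hp).2 h

theorem sum_support_eq_sum_fin {M : Type*} [AddCommMonoid M] {p : R[X]} (hp : p.natDegree < n)
    {φ : R → M} (hφ : φ 0 = 0) : ∑ j ∈ p.support, φ (p.coeff j) = ∑ j : Fin n, φ (p.coeff j) := by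
  rw [← Finset.sum_range fun j => φ (p.coeff j), ← sum_over_range' p (fun _ => hφ) n hp, sum_def]

theorem coeff_iterate_divX (p : R[X]) (m k : ℕ) : (divX^[m] p).coeff k = p.coeff (k + m) := by
  induction m generalizing p with
  | zero => rfl
  | succ m ih => rw [Function.iterate_succ_apply, ih, coeff_divX, add_assoc]

theorem monic_X_pow_add_one (hn : n ≠ 0) : (X ^ n + 1 : R[X]).Monic := by
  simpa using monic_X_pow_add_C (1 : R) hn

theorem degree_X_pow_add_one [Nontrivial R] (hn : n ≠ 0) : (X ^ n + 1 : R[X]).degree = n := by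
  simpa using degree_X_pow_add_C (Nat.pos_of_ne_zero hn) (1 : R)

end Semiring

section Ring

variable {R : Type*} [Ring R] {n : ℕ}

theorem coeff_modByMonic_X_pow_add_one [Nontrivial R] (hn : n ≠ 0) {p : R[X]}
    (hp : p.natDegree < 2 * n) {i : ℕ} (hi : i < n) :
    (p %ₘ (X ^ n + 1)).coeff i = p.coeff i - p.coeff (i + n) := by
  -- `q` is the quotient: its coefficients are those of `p` shifted down by `n`.
  set q := divX^[n] p
  have hq : ∀ k, ((X ^ n + 1) * q).coeff k =
      (if n ≤ k then p.coeff k else 0) + p.coeff (k + n) := by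
    intro k
    rw [add_mul, one_mul, coeff_add, coeff_X_pow_mul', coeff_iterate_divX, coeff_iterate_divX]
    split_ifs with hk <;> simp [Nat.sub_add_cancel, hk]
  have hdeg : (p - (X ^ n + 1) * q).degree < (X ^ n + 1 : R[X]).degree := by
    rw [degree_X_pow_add_one hn, degree_lt_iff_coeff_zero]
    intro k hk
    rw [coeff_sub, hq, if_pos hk, coeff_eq_zero_of_natDegree_lt (by omega : p.natDegree < k + n)]
    simp
  rw [(div_modByMonic_unique q _ (monic_X_pow_add_one hn) ⟨sub_add_cancel _ _, hdeg⟩).2,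
    coeff_sub, hq, if_neg (by omega), zero_add]

theorem coeff_modByMonic_X_pow_add_one_of_le [Nontrivial R] (hn : n ≠ 0) (p : R[X]) {i : ℕ}
    (hi : n ≤ i) : (p %ₘ (X ^ n + 1)).coeff i = 0 := by
  refine coeff_eq_zero_of_degree_lt
    ((degree_modByMonic_lt p (monic_X_pow_add_one hn)).trans_le ?_)
  rw [degree_X_pow_add_one hn]
  exact_mod_cast hi

theorem coeff_X_pow_mul_sub_coeff_X_pow_mul_add {g : R[X]} (hg : g.natDegree < n) {i j : ℕ}
    (hj : j < n) :
    (X ^ j * g).coeff i - (X ^ j * g).coeff (i + n) =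
      if j ≤ i then g.coeff (i - j) else -g.coeff (i + n - j) := by
  rw [coeff_X_pow_mul', coeff_X_pow_mul', if_pos (by omega : j ≤ i + n)]
  split_ifs with hji
  · rw [coeff_eq_zero_of_natDegree_lt (by omega : g.natDegree < i + n - j), sub_zero]
  · rw [zero_sub]

/-- Negacyclic convolution; `i - j` is subtraction in `Fin n`, i.e. modulo `n`. -/
theorem coeff_mul_sub_coeff_mul_add_eq_sum {f g : R[X]} (hf : f.natDegree < n)
    (hg : g.natDegree < n) (i : Fin n) :
    (f * g).coeff i - (f * g).coeff (i + n) =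
      ∑ j : Fin n, f.coeff j * if j ≤ i then g.coeff ↑(i - j) else -g.coeff ↑(i - j) := by
  conv_lhs => rw [as_sum_range' f n hf]
  simp only [← C_mul_X_pow_eq_monomial, Finset.sum_mul, finsetSum_coeff, mul_assoc, coeff_C_mul,
    ← Finset.sum_sub_distrib, ← mul_sub, Finset.sum_range]
  refine Fintype.sum_congr _ _ fun j => ?_
  rw [coeff_X_pow_mul_sub_coeff_X_pow_mul_add hg j.isLt, Fin.val_sub_eq_ite]
  simp only [Fin.le_def]
  split_ifs <;> rfl

end Ring

end Polynomial

/-- For `f, g ∈ ℤ[X]` of degree `< n`, each coefficient of the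
remainder of `f·g` modulo `X^n + 1` is bounded by the product of the Euclidean
norms of the coefficient vectors of `f` and `g`. -/
theorem mulmod_coeff_euclidean_bound (n : ℕ) (hn : 1 ≤ n) (f g : Polynomial ℤ)
    (hf : f.degree < n) (hg : g.degree < n) :
    ∀ i, (|((f * g) %ₘ (X ^ n + 1)).coeff i| : ℝ) ≤
      Real.sqrt (∑ j ∈ f.support, ((f.coeff j : ℝ)) ^ 2) *
        Real.sqrt (∑ j ∈ g.support, ((g.coeff j : ℝ)) ^ 2) := by
  intro i
  have hn0 : n ≠ 0 := by omega
  have : NeZero n := ⟨hn0⟩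
  have hf' := natDegree_lt_of_degree_lt hn0 hf
  have hg' := natDegree_lt_of_degree_lt hn0 hg
  obtain hi | hi := lt_or_ge i n
  swap
  · rw [coeff_modByMonic_X_pow_add_one_of_le hn0 _ hi, Int.cast_zero, abs_zero]
    positivity
  have hfg : (f * g).natDegree < 2 * n := natDegree_mul_le.trans_lt (by omega)
  lift i to Fin n using hi
  rw [coeff_modByMonic_X_pow_add_one hn0 hfg i.isLt, coeff_mul_sub_coeff_mul_add_eq_sum hf' hg',
    sum_support_eq_sum_fin hf' (φ := fun a : ℤ => (a : ℝ) ^ 2) (by simp),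
    sum_support_eq_sum_fin hg' (φ := fun a : ℤ => (a : ℝ) ^ 2) (by simp),
    ← Fin.sum_sq_ite_neg_sub (fun j => (g.coeff j : ℝ)) i]
  push_cast
  exact Real.abs_sum_mul_le_sqrt_mul_sqrt _ _ _
end

section
/- Correctness of the Lyubashevsky–Micciancio one-time signature from Ring-SIS (norm bound): let n, m, b, w be positive integers. For each i = 1, …, m, let k1_i, k2_i ∈ ℤ[X] be polynomials of degree < n with ‖k1_i‖_∞ ≤ b and ‖k2_i‖_∞ ≤ w·b, and let m1 ∈ ℤ[X] be a polynomial of degree < n whose coefficients all lie in {−1, 0, 1} and with ‖m1‖_1 ≤ w. Then for each i, the remainder s_i of k1_i·m1 + k2_i upon division by X^n + 1 satisfies ‖s_i‖_∞ ≤ 2·w·b. -/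
/-! Reduction modulo `X ^ n + 1` folds coefficient `n + j` onto coefficient `j` with a sign change,
so when `deg p, deg q < n` the `j`-th coefficient of `p * q mod (X ^ n + 1)` is at most
`|(p q)_j| + |(p q)_{n+j}|`. Expanding `p * q = Σ_c q_c X^c p`, the shift `X^c p` has degree
`< n + c`, so it meets at most one of the positions `j` and `n + j`; hence
`‖p q mod (X ^ n + 1)‖_∞ ≤ ‖q‖_1 ‖p‖_∞ ≤ w b`, and the triangle inequality adds `‖k2‖_∞ ≤ w b`. -/

open Polynomial

/-- The ℓ∞ norm `‖f‖_∞ = max_j |f_j|` of an integer polynomial. -/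
noncomputable def polyLinf (f : Polynomial ℤ) : ℕ :=
  f.support.sup fun j => (f.coeff j).natAbs

/-- The ℓ1 norm `‖f‖_1 = Σ_j |f_j|` of an integer polynomial. -/
noncomputable def polyL1 (f : Polynomial ℤ) : ℕ :=
  ∑ j ∈ f.support, (f.coeff j).natAbs

open Finset

theorem polyLinf_le_iff {p : ℤ[X]} {B : ℕ} :
    polyLinf p ≤ B ↔ ∀ j, (p.coeff j).natAbs ≤ B := by
  refine ⟨fun h j => ?_, fun h => Finset.sup_le fun j _ => h j⟩
  by_cases hj : j ∈ p.support
  · exact (le_sup (f := fun j => (p.coeff j).natAbs) hj).trans h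
  · simp [notMem_support_iff.mp hj]

theorem natAbs_coeff_le_polyLinf (p : ℤ[X]) (j : ℕ) : (p.coeff j).natAbs ≤ polyLinf p :=
  polyLinf_le_iff.1 le_rfl j

theorem polyLinf_add_le (p q : ℤ[X]) : polyLinf (p + q) ≤ polyLinf p + polyLinf q :=
  polyLinf_le_iff.2 fun j => (coeff_add p q j ▸ Int.natAbs_add_le _ _).trans
    (add_le_add (natAbs_coeff_le_polyLinf p j) (natAbs_coeff_le_polyLinf q j))

theorem degree_mul_lt_add {R : Type*} [Semiring R] {p q : R[X]} {n : ℕ} (hp : p.degree < n)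
    (hq : q.degree < n) : (p * q).degree < ↑(n + n) :=
  calc (p * q).degree ≤ p.degree + q.degree := degree_mul_le p q
    _ ≤ p.degree + n := by gcongr
    _ < n + n := WithBot.add_lt_add_right WithBot.coe_ne_bot hp
    _ = ↑(n + n) := (Nat.cast_add n n).symm

theorem coeff_mul_eq_sum_support {R : Type*} [CommSemiring R] (p q : R[X]) (t : ℕ) :
    (p * q).coeff t = ∑ c ∈ q.support, q.coeff c * (X ^ c * p).coeff t := by
  conv_lhs => rw [q.as_sum_support_C_mul_X_pow, mul_sum]
  simp only [finsetSum_coeff, ← coeff_C_mul, mul_left_comm p, mul_comm p]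

section NegacyclicReduction

variable {R : Type*} [CommRing R] {n : ℕ}

theorem monic_X_pow_add_one (hn : 0 < n) : (X ^ n + 1 : R[X]).Monic := by
  simpa using monic_X_pow_add_C (1 : R) hn.ne'

theorem degree_X_pow_add_one [Nontrivial R] (hn : 0 < n) : (X ^ n + 1 : R[X]).degree = n := by
  simpa using degree_X_pow_add_C hn (1 : R)

theorem modByMonic_X_pow_add_one_eq_self [Nontrivial R] {f : R[X]} (hn : 0 < n)
    (hf : f.degree < n) : f %ₘ (X ^ n + 1) = f :=
  (modByMonic_eq_self_iff (monic_X_pow_add_one hn)).2 (degree_X_pow_add_one (R := R) hn ▸ hf)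

theorem modByMonic_X_pow_add_one_eq_sum [Nontrivial R] {f : R[X]} (hn : 0 < n)
    (hf : f.degree < ↑(n + n)) :
    f %ₘ (X ^ n + 1) = ∑ j ∈ range n, C (f.coeff j - f.coeff (n + j)) * X ^ j := by
  have hsplit : f = ∑ j ∈ range n, C (f.coeff j) * X ^ j
      + ∑ j ∈ range n, C (f.coeff (n + j)) * X ^ (n + j) := by
    rcases eq_or_ne f 0 with rfl | hf0
    · simp
    · exact (f.as_sum_range_C_mul_X_pow' ((natDegree_lt_iff_degree_lt hf0).2 hf)).trans
        (sum_range_add _ _ _)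
  have hlow :
      (∑ j ∈ range n, C (f.coeff j - f.coeff (n + j)) * X ^ j).degree < (n : WithBot ℕ) :=
    mem_degreeLT.1 <| Submodule.sum_mem _ fun j hj => mem_degreeLT.2 <|
      (degree_C_mul_X_pow_le _ _).trans_lt <| WithBot.coe_lt_coe.2 (mem_range.1 hj)
  rw [modByMonic_eq_of_dvd_sub (monic_X_pow_add_one hn), modByMonic_X_pow_add_one_eq_self hn hlow]
  refine ⟨∑ j ∈ range n, C (f.coeff (n + j)) * X ^ j, ?_⟩
  nth_rw 1 [hsplit]
  simp only [C_sub, sub_mul, sum_sub_distrib, mul_sum, add_mul, one_mul, sum_add_distrib, pow_add,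
    mul_left_comm (X ^ n)]
  abel

end NegacyclicReduction

theorem natAbs_coeff_modByMonic_X_pow_add_one_le {n : ℕ} {f : ℤ[X]} (hn : 0 < n)
    (hf : f.degree < ↑(n + n)) (j : ℕ) :
    ((f %ₘ (X ^ n + 1)).coeff j).natAbs ≤ (f.coeff j).natAbs + (f.coeff (n + j)).natAbs := by
  rw [modByMonic_X_pow_add_one_eq_sum hn hf, finsetSum_coeff]
  simp only [coeff_C_mul_X_pow, sum_ite_eq, mem_range]
  split_ifs
  · exact Int.natAbs_sub_le _ _
  · exact Nat.zero_le _

theorem natAbs_coeff_X_pow_mul_add_le {n : ℕ} {p : ℤ[X]} (hp : p.degree < n) (c j : ℕ) :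
    ((X ^ c * p).coeff j).natAbs + ((X ^ c * p).coeff (n + j)).natAbs ≤ polyLinf p := by
  simp only [coeff_X_pow_mul']
  by_cases hcj : c ≤ j
  · have : p.coeff (n + j - c) = 0 :=
      coeff_eq_zero_of_degree_lt (hp.trans_le (by exact_mod_cast (show n ≤ n + j - c by omega)))
    simp [hcj, this, natAbs_coeff_le_polyLinf]
  · split_ifs <;> simp [natAbs_coeff_le_polyLinf]

theorem natAbs_coeff_mul_add_le {n : ℕ} {p : ℤ[X]} (hp : p.degree < n) (q : ℤ[X]) (j : ℕ) :
    ((p * q).coeff j).natAbs + ((p * q).coeff (n + j)).natAbs ≤ polyL1 q * polyLinf p := by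
  have hterm (t : ℕ) : ((p * q).coeff t).natAbs ≤
      ∑ c ∈ q.support, (q.coeff c).natAbs * ((X ^ c * p).coeff t).natAbs := by
    rw [coeff_mul_eq_sum_support]
    exact (Int.natAbs_sum_le _ _).trans_eq (sum_congr rfl fun c _ => Int.natAbs_mul _ _)
  calc ((p * q).coeff j).natAbs + ((p * q).coeff (n + j)).natAbs
      ≤ ∑ c ∈ q.support, (q.coeff c).natAbs *
          (((X ^ c * p).coeff j).natAbs + ((X ^ c * p).coeff (n + j)).natAbs) := by
        simp only [mul_add, sum_add_distrib]
        exact add_le_add (hterm j) (hterm (n + j))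
    _ ≤ ∑ c ∈ q.support, (q.coeff c).natAbs * polyLinf p := by
        gcongr with c; exact natAbs_coeff_X_pow_mul_add_le hp c j
    _ = polyL1 q * polyLinf p := (sum_mul _ _ _).symm

theorem polyLinf_mul_modByMonic_X_pow_add_one_le {n : ℕ} {p q : ℤ[X]} (hn : 0 < n)
    (hp : p.degree < n) (hq : q.degree < n) :
    polyLinf (p * q %ₘ (X ^ n + 1)) ≤ polyL1 q * polyLinf p :=
  polyLinf_le_iff.2 fun j => (natAbs_coeff_modByMonic_X_pow_add_one_le hn
    (degree_mul_lt_add hp hq) j).trans (natAbs_coeff_mul_add_le hp q j)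

theorem ots_ringsis_norm_bound_general (n m b w : ℕ) (hn : 1 ≤ n)
    (k1 k2 : Fin m → Polynomial ℤ)
    (hk1deg : ∀ i, (k1 i).degree < n) (hk2deg : ∀ i, (k2 i).degree < n)
    (hk1 : ∀ i, polyLinf (k1 i) ≤ b) (hk2 : ∀ i, polyLinf (k2 i) ≤ w * b)
    (m1 : Polynomial ℤ) (hm1deg : m1.degree < n)
    (hm1w : polyL1 m1 ≤ w) :
    ∀ i, polyLinf ((k1 i * m1 + k2 i) %ₘ (X ^ n + 1)) ≤ 2 * w * b := by
  intro i
  rw [add_modByMonic, modByMonic_X_pow_add_one_eq_self hn (hk2deg i)]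
  calc polyLinf (k1 i * m1 %ₘ (X ^ n + 1) + k2 i)
      ≤ polyL1 m1 * polyLinf (k1 i) + polyLinf (k2 i) :=
        (polyLinf_add_le _ _).trans <|
          add_le_add_left (polyLinf_mul_modByMonic_X_pow_add_one_le hn (hk1deg i) hm1deg) _
    _ ≤ w * b + w * b := add_le_add (Nat.mul_le_mul hm1w (hk1 i)) (hk2 i)
    _ = 2 * w * b := by ring

/-- Correctness (norm bound) of the Lyubashevsky–Micciancio one-time
signature from Ring-SIS: each component `s_i = (k1_i·m1 + k2_i) mod (X^n + 1)` of
the signature satisfies `‖s_i‖_∞ ≤ 2·w·b`. -/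
theorem ots_ringsis_norm_bound (n m b w : ℕ) (hn : 1 ≤ n) (hm : 1 ≤ m)
    (hb : 1 ≤ b) (hw : 1 ≤ w)
    (k1 k2 : Fin m → Polynomial ℤ)
    (hk1deg : ∀ i, (k1 i).degree < n) (hk2deg : ∀ i, (k2 i).degree < n)
    (hk1 : ∀ i, polyLinf (k1 i) ≤ b) (hk2 : ∀ i, polyLinf (k2 i) ≤ w * b)
    (m1 : Polynomial ℤ) (hm1deg : m1.degree < n)
    (hm1coeff : ∀ j, m1.coeff j = -1 ∨ m1.coeff j = 0 ∨ m1.coeff j = 1)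
    (hm1w : polyL1 m1 ≤ w) :
    ∀ i, polyLinf ((k1 i * m1 + k2 i) %ₘ (X ^ n + 1)) ≤ 2 * w * b :=
  ots_ringsis_norm_bound_general n m b w hn k1 k2 hk1deg hk2deg hk1 hk2 m1 hm1deg hm1w
end

section
/- Rounding lemma: let q ≥ 3 be an odd integer, let μ ∈ {0,1}, and let e ∈ ℤ with 4·|e| < q − 1. Let w ∈ ℤ/qℤ be the reduction of μ·⌊q/2⌋ + e modulo q. Then the cyclic distance from w to ⌊q/2⌋ is strictly smaller than the cyclic distance from w to 0 if and only if μ = 1, where the cyclic distance from an element v ∈ ℤ/qℤ to an integer c is the absolute value of the representative of v − c in the interval (−q/2, q/2]. -/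
lemma valMinAbs_intCast_of (q : ℕ) [NeZero q] (a : ℤ) (h1 : -(q:ℤ) < 2*a) (h2 : 2*a ≤ q) :
    ((a : ZMod q)).valMinAbs = a := by
  rw [ZMod.valMinAbs_spec]
  exact ⟨rfl, Set.mem_Ioc.mpr ⟨by omega, by omega⟩⟩

/-- Rounding lemma: for odd `q ≥ 3`, `μ ∈ {0,1}` and noise `e` with
`4|e| < q − 1`, the reduction `w` of `μ·⌊q/2⌋ + e` mod `q` is strictly closer
(in cyclic distance, measured via the representative in `(−q/2, q/2]`) to
`⌊q/2⌋` than to `0` if and only if `μ = 1`. -/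
theorem rounding_lemma (q : ℕ) [NeZero q] (hq : 3 ≤ q) (hodd : Odd q)
    (μ e : ℤ) (hμ : μ = 0 ∨ μ = 1) (he : 4 * |e| < (q : ℤ) - 1)
    (w : ZMod q) (hw : w = ((μ * ((q : ℤ) / 2) + e : ℤ) : ZMod q)) :
    ((w - (((q : ℤ) / 2 : ℤ) : ZMod q)).valMinAbs.natAbs < (w - ((0 : ℤ) : ZMod q)).valMinAbs.natAbs)
      ↔ μ = 1 := by
  obtain ⟨k, hk⟩ := hodd
  have hkz : (q : ℤ) = 2 * k + 1 := by exact_mod_cast hk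
  have hdiv : (q : ℤ) / 2 = k := by omega
  have hqcast : ((q : ℕ) : ZMod q) = 0 := ZMod.natCast_self q
  have he' : 4 * (e.natAbs : ℤ) < (q : ℤ) - 1 := by
    rwa [Int.abs_eq_natAbs] at he
  rw [hdiv] at hw ⊢
  rcases hμ with rfl | rfl
  · -- μ = 0 : w = e
    have h0 : w - ((0:ℤ) : ZMod q) = ((e : ℤ) : ZMod q) := by rw [hw]; push_cast; ring
    have h1 : w - ((k:ℤ) : ZMod q) = (((e - k) : ℤ) : ZMod q) := by rw [hw]; push_cast; ring
    rw [h0, h1, valMinAbs_intCast_of q e (by omega) (by omega)]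
    by_cases hepos : 0 ≤ e
    · rw [valMinAbs_intCast_of q (e - k) (by omega) (by omega)]
      constructor
      · intro hlt; exfalso; omega
      · omega
    · have hcong : (((e - k) : ℤ) : ZMod q) = (((e + k + 1) : ℤ) : ZMod q) := by
        have h2 : ((e + k + 1 : ℤ) : ZMod q) = ((e - k + q : ℤ) : ZMod q) := by
          rw [hkz]; ring_nf
        rw [h2]; push_cast [hqcast]; ring
      rw [hcong, valMinAbs_intCast_of q (e + k + 1) (by omega) (by omega)]
      constructor
      · intro hlt; exfalso; omega
      · omega
  · -- μ = 1 : w = k + e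
    have h1 : w - ((k:ℤ) : ZMod q) = ((e : ℤ) : ZMod q) := by rw [hw]; push_cast; ring
    have h0 : w - ((0:ℤ) : ZMod q) = (((k + e) : ℤ) : ZMod q) := by rw [hw]; push_cast; ring
    rw [h0, h1, valMinAbs_intCast_of q e (by omega) (by omega)]
    simp only [iff_true]
    by_cases hepos : e ≤ 0
    · rw [valMinAbs_intCast_of q (k + e) (by omega) (by omega)]
      omega
    · have hcong : (((k + e) : ℤ) : ZMod q) = (((e - k - 1) : ℤ) : ZMod q) := by
        have h2 : ((k + e : ℤ) : ZMod q) = ((e - k - 1 + q : ℤ) : ZMod q) := by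
          rw [hkz]; ring_nf
        rw [h2]; push_cast [hqcast]; ring
      rw [hcong, valMinAbs_intCast_of q (e - k - 1) (by omega) (by omega)]
      omega
end
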